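/- Let (E,𝓔) be a measurable space, μ an atomless σ-finite measure, Q(x,dy) = q(x,y)μ(dy) a μ-reversible Markov kernel with jointly measurable density q, π : E → (0,∞) a measurable probability density with respect to μ such that μ-ess sup π = +∞, and α(x,y) = min{1, π(y)/π(x)}. For M ∈ ℕ define Q_*(x,dy) = Σ_{m=1}^{M} C(M,m) Q^m(x,dy) (so Q_*(x,E) = 2^M − 1), and let q_*(x,y) be its density with respect to μ. Then there do not exist M ∈ ℕ, c > 0, and a probability measure ξ(dy) = h(y)μ(dy) with bounded measurable density h, such that q_*(x,y)α(x,y)μ(dy) ≥ c·ξ(dy) for every x ∈ E. -/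

import Mathlib

/-!
For `x` with `π x` large, `α(x, y) ≤ π y / π x` is uniformly small on each sublevel set
`{π ≤ s}`, while `Q_*(x, ·)` has total mass at most `2^M - 1`. Hence the minorizing measure
`c·ξ` gives zero mass to every `{π ≤ s}`; these sets exhaust `E` because `π` is finite,
so `c·ξ = 0`, which contradicts `ξ(E) = 1`.
-/

open MeasureTheory ProbabilityTheory
open scoped ENNReal

/-- The `m`-fold composition of a Markov kernel (`kiter Q 0` is the identity kernel). -/
noncomputable def kiter {E : Type*} [MeasurableSpace E] (Q : Kernel E E) : ℕ → Kernel E E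
  | 0 => Kernel.id
  | n + 1 => Q ∘ₖ kiter Q n

open Filter Topology

instance kiter.instIsMarkovKernel {E : Type*} [MeasurableSpace E] (Q : Kernel E E)
    [IsMarkovKernel Q] (m : ℕ) : IsMarkovKernel (kiter Q m) := by
  induction m with
  | zero => rw [kiter]; infer_instance
  | succ n ih => rw [kiter]; infer_instance

section Minorization

variable {E : Type*} [MeasurableSpace E]

lemma MeasureTheory.Measure.finsetSum_nsmul_apply_le {ι : Type*} (s : Finset ι) (w : ι → ℕ)
    (P : ι → Measure E) [∀ i, IsProbabilityMeasure (P i)] (A : Set E) :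
    (∑ i ∈ s, w i • P i) A ≤ ∑ i ∈ s, (w i : ℝ≥0∞) := by
  rw [Measure.finsetSum_apply]
  refine Finset.sum_le_sum fun i _ => ?_
  rw [Measure.smul_apply, nsmul_eq_mul]
  exact mul_le_of_le_one_right' prob_le_one

lemma exists_lt_of_essSup_eq_top {μ : Measure E} {π : E → ℝ≥0∞} (hess : essSup π μ = ⊤)
    {a : ℝ≥0∞} (ha : a ≠ ⊤) : ∃ x, a < π x := by
  by_contra! h
  exact ha (top_le_iff.mp (hess ▸ essSup_le_of_ae_le a (Eventually.of_forall h)))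

lemma setLIntegral_mul_min_div_le {μ : Measure E} {f π : E → ℝ≥0∞} {A : Set E} {s t : ℝ≥0∞}
    (hA : MeasurableSet A) (hπA : ∀ y ∈ A, π y ≤ s) (hs : s ≠ ⊤) (ht : t ≠ 0) :
    ∫⁻ y in A, f y * min 1 (π y / t) ∂μ ≤ s / t * ∫⁻ y in A, f y ∂μ := by
  rw [← lintegral_const_mul' _ _ (ENNReal.div_ne_top hs ht)]
  refine setLIntegral_mono' hA fun y hy => ?_
  calc f y * min 1 (π y / t) ≤ f y * (s / t) := by
        gcongr
        exact (min_le_right _ _).trans (ENNReal.div_le_div_right (hπA y hy) _)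
    _ = s / t * f y := mul_comm _ _

variable {μ ν : Measure E} {f : E → E → ℝ≥0∞} {π : E → ℝ≥0∞} {K : ℝ≥0∞}

lemma measure_sublevel_eq_zero_of_minorization (hπ : Measurable π)
    (hunb : ∀ a ≠ ⊤, ∃ x, a < π x) (hK : K ≠ ⊤)
    (hf : ∀ x A, MeasurableSet A → ∫⁻ y in A, f x y ∂μ ≤ K)
    (hν : ∀ x A, MeasurableSet A → ν A ≤ ∫⁻ y in A, f x y * min 1 (π y / π x) ∂μ) (s : ℕ) :
    ν {y | π y ≤ s} = 0 := by
  have hA : MeasurableSet {y | π y ≤ s} := hπ measurableSet_Iic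
  have hbound : ∀ n : ℕ, ν {y | π y ≤ s} ≤ s * K * ((n + 1 : ℕ) : ℝ≥0∞)⁻¹ := fun n => by
    obtain ⟨x, hx⟩ := hunb (n + 1 : ℕ) (ENNReal.natCast_ne_top _)
    have hx0 : π x ≠ 0 := (hx.trans_le' zero_le).ne'
    calc ν {y | π y ≤ s}
        ≤ s / π x * ∫⁻ y in {y | π y ≤ s}, f x y ∂μ :=
          (hν x _ hA).trans
            (setLIntegral_mul_min_div_le hA (fun _ hy => hy) (ENNReal.natCast_ne_top s) hx0)
      _ ≤ s / ((n + 1 : ℕ) : ℝ≥0∞) * K := by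
          gcongr
          exact hf x _ hA
      _ = s * K * ((n + 1 : ℕ) : ℝ≥0∞)⁻¹ := by rw [ENNReal.div_eq_inv_mul]; ring
  have htend : Tendsto (fun n : ℕ => s * K * ((n + 1 : ℕ) : ℝ≥0∞)⁻¹) atTop (𝓝 0) := by
    simpa using ENNReal.Tendsto.const_mul
      ((tendsto_add_atTop_iff_nat 1).mpr ENNReal.tendsto_inv_nat_nhds_zero)
      (Or.inr (ENNReal.mul_ne_top (ENNReal.natCast_ne_top s) hK))
  exact nonpos_iff_eq_zero.mp (ge_of_tendsto' htend hbound)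

lemma measure_eq_zero_of_minorization (hπ : Measurable π) (hπ_fin : ∀ x, π x ≠ ⊤)
    (hunb : ∀ a ≠ ⊤, ∃ x, a < π x) (hK : K ≠ ⊤)
    (hf : ∀ x A, MeasurableSet A → ∫⁻ y in A, f x y ∂μ ≤ K)
    (hν : ∀ x A, MeasurableSet A → ν A ≤ ∫⁻ y in A, f x y * min 1 (π y / π x) ∂μ) :
    ν = 0 := by
  have hcover : ⋃ s : ℕ, {y | π y ≤ s} = Set.univ :=
    Set.eq_univ_of_forall fun y =>
      Set.mem_iUnion.mpr ((ENNReal.exists_nat_gt (hπ_fin y)).imp fun _ h => h.le)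
  rw [← Measure.measure_univ_eq_zero, ← hcover, measure_iUnion_null_iff]
  exact measure_sublevel_eq_zero_of_minorization hπ hunb hK hf hν

end Minorization

theorem stmt_1_general {E : Type*} [MeasurableSpace E]
    (μ : Measure E)
    (Q : Kernel E E) [IsMarkovKernel Q]
    (π : E → ℝ≥0∞) (hπ_meas : Measurable π)
    (hπ_fin : ∀ x, π x ≠ ⊤)
    (hess : essSup π μ = ⊤) :
    ¬ ∃ (M : ℕ) (c : ℝ) (qstar : E → E → ℝ≥0∞) (hfun : E → ℝ≥0∞),
        1 ≤ M ∧ 0 < c ∧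
        -- `q_*` is a jointly measurable density of `Q_* = Σ_{m=1}^M C(M,m) Q^m` w.r.t. `μ`
        Measurable (Function.uncurry qstar) ∧
        (∀ x : E, μ.withDensity (qstar x)
          = ∑ m ∈ Finset.Icc 1 M, (M.choose m) • ((kiter Q m) x : Measure E)) ∧
        -- `ξ = h·μ` is a probability measure with bounded measurable density `h`
        Measurable hfun ∧ (∃ Cb : ℝ≥0∞, Cb ≠ ⊤ ∧ ∀ y, hfun y ≤ Cb) ∧
        ∫⁻ y, hfun y ∂μ = 1 ∧
        -- the minorization `q_*(x,y)α(x,y)μ(dy) ≥ c·ξ(dy)` for every `x`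
        (∀ (x : E) (A : Set E), MeasurableSet A →
          ENNReal.ofReal c * ∫⁻ y in A, hfun y ∂μ
            ≤ ∫⁻ y in A, qstar x y * min 1 (π y / π x) ∂μ) := by
  rintro ⟨M, c, qstar, hfun, -, hc, -, hqstar, -, -, hh_prob, hmin⟩
  have hmass : ∀ x A, MeasurableSet A →
      ∫⁻ y in A, qstar x y ∂μ ≤ ∑ m ∈ Finset.Icc 1 M, (M.choose m : ℝ≥0∞) := fun x A hA => by
    rw [← withDensity_apply _ hA, hqstar x]
    exact Measure.finsetSum_nsmul_apply_le _ _ _ A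
  have hξ : ENNReal.ofReal c • μ.withDensity hfun = 0 :=
    measure_eq_zero_of_minorization hπ_meas hπ_fin (fun _ ha => exists_lt_of_essSup_eq_top hess ha)
      (ENNReal.sum_ne_top.mpr fun _ _ => ENNReal.natCast_ne_top _) hmass
      (fun x A hA => by simpa [withDensity_apply _ hA] using hmin x A hA)
  have hc0 : ENNReal.ofReal c = 0 := by
    simpa [withDensity_apply _ MeasurableSet.univ, hh_prob] using congrArg (· Set.univ) hξ
  exact (ENNReal.ofReal_pos.mpr hc).ne' hc0

/-- If `μ-ess sup π = +∞`, then there is no minorization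
`q_*(x,y)α(x,y)μ(dy) ≥ c·ξ(dy)`, uniform in `x`, where
`Q_*(x,dy) = Σ_{m=1}^M C(M,m) Q^m(x,dy)` has density `q_*` with respect to `μ`,
`α(x,y) = min{1, π(y)/π(x)}`, and `ξ = h·μ` is a probability measure with bounded
density `h`. -/
theorem stmt_1 {E : Type*} [MeasurableSpace E]
    (μ : Measure E) [SigmaFinite μ] [NullSingletonClass μ]
    (Q : Kernel E E) [IsMarkovKernel Q]
    (q : E → E → ℝ≥0∞) (hq_meas : Measurable (Function.uncurry q))
    (hQq : ∀ x : E, (Q x : Measure E) = μ.withDensity (q x))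
    (hQrev : ∀ A B : Set E, MeasurableSet A → MeasurableSet B →
      ∫⁻ x in A, Q x B ∂μ = ∫⁻ x in B, Q x A ∂μ)
    (π : E → ℝ≥0∞) (hπ_meas : Measurable π)
    (hπ_pos : ∀ x, 0 < π x) (hπ_fin : ∀ x, π x ≠ ⊤)
    (hπ_prob : ∫⁻ x, π x ∂μ = 1)
    (hess : essSup π μ = ⊤) :
    ¬ ∃ (M : ℕ) (c : ℝ) (qstar : E → E → ℝ≥0∞) (hfun : E → ℝ≥0∞),
        1 ≤ M ∧ 0 < c ∧
        -- `q_*` is a jointly measurable density of `Q_* = Σ_{m=1}^M C(M,m) Q^m` w.r.t. `μ`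
        Measurable (Function.uncurry qstar) ∧
        (∀ x : E, μ.withDensity (qstar x)
          = ∑ m ∈ Finset.Icc 1 M, (M.choose m) • ((kiter Q m) x : Measure E)) ∧
        -- `ξ = h·μ` is a probability measure with bounded measurable density `h`
        Measurable hfun ∧ (∃ Cb : ℝ≥0∞, Cb ≠ ⊤ ∧ ∀ y, hfun y ≤ Cb) ∧
        ∫⁻ y, hfun y ∂μ = 1 ∧
        -- the minorization `q_*(x,y)α(x,y)μ(dy) ≥ c·ξ(dy)` for every `x`
        (∀ (x : E) (A : Set E), MeasurableSet A →
          ENNReal.ofReal c * ∫⁻ y in A, hfun y ∂μ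
            ≤ ∫⁻ y in A, qstar x y * min 1 (π y / π x) ∂μ) :=
  stmt_1_general μ Q π hπ_meas hπ_fin hess
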